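/- arXiv:1709.03970 — 2 statements merged into one kernel-verified Lean document; each statement's English description precedes it below -/
import Mathlib

section
/- The map T is Fréchet differentiable at every u ∈ L²(0,L), with Fréchet derivative the bounded linear operator DT(u) given by (DT(u)h)(x) = ∫₀^x f'(u(s)) h(s) ds for h ∈ L²(0,L); that is, ‖T(u+h) − T(u) − DT(u)h‖_{L²(0,L)} / ‖h‖_{L²(0,L)} → 0 as ‖h‖_{L²(0,L)} → 0. -/
open MeasureTheory ENNReal


lemma taylor_quad (f : ℝ → ℝ) (hf : ContDiff ℝ 1 f) (K : NNReal)
    (hlip : LipschitzWith K (deriv f)) (a b : ℝ) :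
    |f (a + b) - f a - deriv f a * b| ≤ K * (b * b) := by
  set s : Set ℝ := Set.Icc (min a (a + b)) (max a (a + b)) with hs
  have hconv : Convex ℝ s := convex_Icc _ _
  have ha : a ∈ s := ⟨min_le_left _ _, le_max_left _ _⟩
  have hab : a + b ∈ s := ⟨min_le_right _ _, le_max_right _ _⟩
  have hder : ∀ y ∈ s, HasDerivWithinAt (fun y => f y - deriv f a * y)
      (deriv f y - deriv f a) s y := by
    intro y _
    exact ((hf.differentiable one_ne_zero y).hasDerivAt.sub
      (by simpa using (hasDerivAt_id y).const_mul (deriv f a))).hasDerivWithinAt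
  have hbound : ∀ y ∈ s, ‖deriv f y - deriv f a‖ ≤ K * |b| := by
    intro y hy
    have hd : dist (deriv f y) (deriv f a) ≤ K * dist y a := hlip.dist_le_mul y a
    have hlo : a - |b| ≤ min a (a + b) :=
      le_min (by linarith [abs_nonneg b]) (by linarith [neg_abs_le b])
    have hhi : max a (a + b) ≤ a + |b| :=
      max_le (by linarith [abs_nonneg b]) (by linarith [le_abs_self b])
    have hya : |y - a| ≤ |b| := by
      rw [abs_le]; rcases hy with ⟨h1, h2⟩; constructor <;> linarith
    rw [Real.norm_eq_abs, ← Real.dist_eq]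
    calc dist (deriv f y) (deriv f a) ≤ K * dist y a := hd
      _ ≤ K * |b| := by
          rw [Real.dist_eq]
          exact mul_le_mul_of_nonneg_left hya K.2
  have key := hconv.norm_image_sub_le_of_norm_hasDerivWithin_le hder hbound ha hab
  calc |f (a + b) - f a - deriv f a * b|
      = ‖f (a + b) - deriv f a * (a + b) - (f a - deriv f a * a)‖ := by
        rw [Real.norm_eq_abs]; ring_nf
    _ ≤ K * |b| * ‖a + b - a‖ := key
    _ = K * (b * b) := by
        rw [add_sub_cancel_left, Real.norm_eq_abs, mul_assoc, abs_mul_abs_self]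


/-- the Volterra-type operator `T(u)(x) = ∫₀ˣ f(u(s)) ds` on `L²(0,L)`,
with `f` continuously differentiable, `f` and `f'` bounded and `f'` Lipschitz, is Fréchet
differentiable at every `u ∈ L²(0,L)`, with derivative the bounded linear operator
`(DT(u)h)(x) = ∫₀ˣ f'(u(s)) h(s) ds`. -/
theorem volterra_operator_frechet_differentiable
    (L : ℝ) (hL : 0 < L)
    (f : ℝ → ℝ) (hf : ContDiff ℝ 1 f)
    (Mf : ℝ) (hfb : ∀ s : ℝ, |f s| ≤ Mf)
    (Mf' : ℝ) (hf'b : ∀ s : ℝ, |deriv f s| ≤ Mf')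
    (K : NNReal) (hf'lip : LipschitzWith K (deriv f))
    (T : Lp ℝ 2 (volume.restrict (Set.Ioo 0 L)) → Lp ℝ 2 (volume.restrict (Set.Ioo 0 L)))
    (hT : ∀ u : Lp ℝ 2 (volume.restrict (Set.Ioo 0 L)),
      (T u : ℝ → ℝ) =ᵐ[volume.restrict (Set.Ioo 0 L)]
        fun x => ∫ s in (0 : ℝ)..x, f (u s))
    (DT : Lp ℝ 2 (volume.restrict (Set.Ioo 0 L)) →
      (Lp ℝ 2 (volume.restrict (Set.Ioo 0 L)) →L[ℝ] Lp ℝ 2 (volume.restrict (Set.Ioo 0 L))))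
    (hDT : ∀ u h : Lp ℝ 2 (volume.restrict (Set.Ioo 0 L)),
      (DT u h : ℝ → ℝ) =ᵐ[volume.restrict (Set.Ioo 0 L)]
        fun x => ∫ s in (0 : ℝ)..x, deriv f (u s) * h s) :
    ∀ u : Lp ℝ 2 (volume.restrict (Set.Ioo 0 L)), HasFDerivAt T (DT u) u := by
  intro u
  haveI hfin : IsFiniteMeasure (volume.restrict (Set.Ioo 0 L)) := by
    constructor
    rw [Measure.restrict_apply_univ, Real.volume_Ioo]
    exact ENNReal.ofReal_lt_top
  set A : ℝ := (measureUnivNNReal (volume.restrict (Set.Ioo 0 L)) : ℝ)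
      ^ ((2 : ℝ≥0∞).toReal)⁻¹ with hAdef
  have hA0 : 0 ≤ A := Real.rpow_nonneg (NNReal.coe_nonneg _) _
  have hfc : Continuous f := hf.continuous
  have hf'c : Continuous (deriv f) := hf'lip.continuous
  have key : ∀ h : Lp ℝ 2 (volume.restrict (Set.Ioo 0 L)),
      ‖T (u + h) - T u - DT u h‖ ≤ A * K * ‖h‖ ^ 2 := by
    intro h
    have hu := Lp.aestronglyMeasurable u
    have hh := Lp.aestronglyMeasurable h
    set ψ : ℝ → ℝ := fun s => f (u s + h s) - f (u s) - deriv f (u s) * h s with hψdef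
    have hψm : AEStronglyMeasurable ψ (volume.restrict (Set.Ioo 0 L)) :=
      ((hfc.comp_aestronglyMeasurable (hu.add hh)).sub
        (hfc.comp_aestronglyMeasurable hu)).sub
        ((hf'c.comp_aestronglyMeasurable hu).mul hh)
    have hsq : Integrable (fun s => h s * h s) (volume.restrict (Set.Ioo 0 L)) := by
      simpa [RCLike.inner_apply, pow_two] using L2.integrable_inner (𝕜 := ℝ) h h
    have hψb : ∀ s, ‖ψ s‖ ≤ (K : ℝ) * (h s * h s) := fun s => by
      simpa [Real.norm_eq_abs] using taylor_quad f hf K hf'lip (u s) (h s)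
    have hψint : Integrable ψ (volume.restrict (Set.Ioo 0 L)) :=
      (hsq.const_mul K).mono' hψm (ae_of_all _ hψb)
    have hnorm : ∫ s in Set.Ioo 0 L, h s * h s = ‖h‖ ^ 2 := by
      have h1 : (inner ℝ h h : ℝ) = ∫ s in Set.Ioo 0 L, h s * h s := by
        rw [L2.inner_def]
        simp [RCLike.inner_apply, pow_two]
      rw [← h1, real_inner_self_eq_norm_sq]
    have hψI : ∫ s in Set.Ioo 0 L, |ψ s| ≤ (K : ℝ) * ‖h‖ ^ 2 := by
      have h1 : ∫ s in Set.Ioo 0 L, |ψ s| ≤ ∫ s in Set.Ioo 0 L, (K : ℝ) * (h s * h s) :=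
        integral_mono hψint.abs (hsq.const_mul K)
          (fun s => by simpa [Real.norm_eq_abs] using hψb s)
      rwa [integral_const_mul, hnorm] at h1
    have hF1 : Integrable (fun s => f (u s + h s)) (volume.restrict (Set.Ioo 0 L)) :=
      (integrable_const Mf).mono' (hfc.comp_aestronglyMeasurable (hu.add hh))
        (ae_of_all _ fun s => by simpa [Real.norm_eq_abs] using hfb (u s + h s))
    have hF2 : Integrable (fun s => f (u s)) (volume.restrict (Set.Ioo 0 L)) :=
      (integrable_const Mf).mono' (hfc.comp_aestronglyMeasurable hu)
        (ae_of_all _ fun s => by simpa [Real.norm_eq_abs] using hfb (u s))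
    have hhint : Integrable (fun s => h s) (volume.restrict (Set.Ioo 0 L)) :=
      (Lp.memLp h).integrable (by norm_num)
    have hF3 : Integrable (fun s => deriv f (u s) * h s) (volume.restrict (Set.Ioo 0 L)) :=
      hhint.bdd_mul (hf'c.comp_aestronglyMeasurable hu)
        (c := Mf') (ae_of_all _ fun s => by simpa [Real.norm_eq_abs] using hf'b (u s))
    have e4 : ∀ᵐ s ∂(volume : Measure ℝ), s ∈ Set.Ioo 0 L →
        ((u + h : Lp ℝ 2 (volume.restrict (Set.Ioo 0 L))) : ℝ → ℝ) s = u s + h s :=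
      (ae_restrict_iff' measurableSet_Ioo).mp (Lp.coeFn_add u h)
    have hbound_ae : ∀ᵐ x ∂(volume.restrict (Set.Ioo 0 L)),
        ‖(T (u + h) - T u - DT u h :
          Lp ℝ 2 (volume.restrict (Set.Ioo 0 L))) x‖ ≤ (K : ℝ) * ‖h‖ ^ 2 := by
      have e5 : ((T (u + h) - T u - DT u h :
          Lp ℝ 2 (volume.restrict (Set.Ioo 0 L))) : ℝ → ℝ) =ᵐ[volume.restrict (Set.Ioo 0 L)]
          fun x => (T (u + h)) x - (T u) x - (DT u h) x := by
        filter_upwards [Lp.coeFn_sub (T (u + h) - T u) (DT u h),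
          Lp.coeFn_sub (T (u + h)) (T u)] with x h1 h2
        simp only [Pi.sub_apply] at h1 h2
        rw [h1, h2]
      filter_upwards [e5, hT (u + h), hT u, hDT u h,
        ae_restrict_mem measurableSet_Ioo] with x h5 h1 h2 h3 hx
      have hx0 : (0 : ℝ) ≤ x := le_of_lt hx.1
      have hsub : Set.uIoc 0 x ⊆ Set.Ioo 0 L := by
        rw [Set.uIoc_of_le hx0]
        exact fun s hs => ⟨hs.1, lt_of_le_of_lt hs.2 hx.2⟩
      have hres : (volume : Measure ℝ).restrict (Set.uIoc 0 x)
          ≤ (volume : Measure ℝ).restrict (Set.Ioo 0 L) :=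
        Measure.restrict_mono hsub le_rfl
      have i1 : ∫ s in (0 : ℝ)..x,
          f (((u + h : Lp ℝ 2 (volume.restrict (Set.Ioo 0 L))) : ℝ → ℝ) s)
          = ∫ s in (0 : ℝ)..x, f (u s + h s) := by
        apply intervalIntegral.integral_congr_ae
        filter_upwards [e4] with s hs hmem
        rw [hs (hsub hmem)]
      have I1 : IntervalIntegrable (fun s => f (u s + h s)) volume 0 x := by
        rw [intervalIntegrable_iff]; exact hF1.mono_measure hres
      have I2 : IntervalIntegrable (fun s => f (u s)) volume 0 x := by
        rw [intervalIntegrable_iff]; exact hF2.mono_measure hres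
      have I3 : IntervalIntegrable (fun s => deriv f (u s) * h s) volume 0 x := by
        rw [intervalIntegrable_iff]; exact hF3.mono_measure hres
      rw [h5, h1, h2, h3, i1, ← intervalIntegral.integral_sub I1 I2,
        ← intervalIntegral.integral_sub (I1.sub I2) I3]
      calc ‖∫ s in (0 : ℝ)..x, ψ s‖
          ≤ ∫ s in (0 : ℝ)..x, ‖ψ s‖ :=
            intervalIntegral.norm_integral_le_integral_norm hx0
        _ = ∫ s in Set.Ioc 0 x, |ψ s| := by
            rw [intervalIntegral.integral_of_le hx0]
            simp [Real.norm_eq_abs]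
        _ ≤ ∫ s in Set.Ioo 0 L, |ψ s| := by
            apply setIntegral_mono_set hψint.abs
            · exact Filter.Eventually.of_forall fun s => abs_nonneg _
            · exact HasSubset.Subset.eventuallyLE
                (fun s hs => ⟨hs.1, lt_of_le_of_lt hs.2 hx.2⟩)
        _ ≤ (K : ℝ) * ‖h‖ ^ 2 := hψI
    have hb := Lp.norm_le_of_ae_bound (f := T (u + h) - T u - DT u h)
      (C := (K : ℝ) * ‖h‖ ^ 2) (by positivity) hbound_ae
    calc ‖T (u + h) - T u - DT u h‖
        ≤ (measureUnivNNReal (volume.restrict (Set.Ioo 0 L)) : ℝ)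
            ^ ((2 : ℝ≥0∞).toReal)⁻¹ * ((K : ℝ) * ‖h‖ ^ 2) := hb
      _ = A * K * ‖h‖ ^ 2 := by rw [hAdef]; ring
  rw [hasFDerivAt_iff_isLittleO_nhds_zero, Asymptotics.isLittleO_iff]
  intro c hc
  have hAK : 0 ≤ A * K := mul_nonneg hA0 K.2
  have hδ : 0 < c / (A * K + 1) := by positivity
  filter_upwards [Metric.ball_mem_nhds (0 : Lp ℝ 2 (volume.restrict (Set.Ioo 0 L))) hδ]
    with h hball
  have hn : ‖h‖ < c / (A * K + 1) := by
    simpa [Metric.mem_ball, dist_zero_right] using hball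
  have h2 : ‖h‖ * (A * K + 1) < c := (lt_div_iff₀ (by positivity)).mp hn
  calc ‖T (u + h) - T u - DT u h‖ ≤ A * K * ‖h‖ ^ 2 := key h
    _ ≤ c * ‖h‖ := by nlinarith [norm_nonneg h]
end

section
/- For all c, w ∈ D(𝒜) (with twice continuously differentiable representatives satisfying the Neumann boundary conditions), ⟨𝒜c, w⟩_X = ⟨c, 𝒜w⟩_X; that is, ∫₀^L (λ c₁ − (D c₁')')(x) w₁(x) dx + Σ_{k=1}^{3} ∫_{L₁}^{L} ∫₀^{R_k} r² ( λ c_{k+1} − (𝒟/r²) ∂_r(r² ∂_r c_{k+1}) )(x,r) w_{k+1}(x,r) dr dx equals the same expression with the roles of c and w interchanged. In other words, the operator 𝒜 is symmetric on X. -/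
open Set MeasureTheory intervalIntegral

lemma parts_zero {a b : ℝ} (hab : a < b) {u v u' v' : ℝ → ℝ}
    (hu : ContinuousOn u (Set.Icc a b)) (hv : ContinuousOn v (Set.Icc a b))
    (huu' : ∀ x ∈ Set.Ioo a b, HasDerivAt u (u' x) x)
    (hvv' : ∀ x ∈ Set.Ioo a b, HasDerivAt v (v' x) x)
    (hu' : ContinuousOn u' (Set.Icc a b)) (hv' : ContinuousOn v' (Set.Icc a b))
    (hua : u a = 0) (hub : u b = 0) :
    ∫ x in a..b, u' x * v x = - ∫ x in a..b, u x * v' x := by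
  have huIcc : Set.uIcc a b = Set.Icc a b := Set.uIcc_of_le hab.le
  have hmin : min a b = a := min_eq_left hab.le
  have hmax : max a b = b := max_eq_right hab.le
  have iu' : IntervalIntegrable u' volume a b := by
    apply ContinuousOn.intervalIntegrable; rwa [huIcc]
  have iv' : IntervalIntegrable v' volume a b := by
    apply ContinuousOn.intervalIntegrable; rwa [huIcc]
  have h := integral_deriv_mul_eq_sub_of_hasDerivAt (a := a) (b := b)
    (u := u) (v := v) (u' := u') (v' := v')
    (by rwa [huIcc]) (by rwa [huIcc])
    (by rw [hmin, hmax]; exact huu') (by rw [hmin, hmax]; exact hvv') iu' iv'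
  rw [hua, hub, zero_mul, zero_mul, sub_zero] at h
  have i1 : IntervalIntegrable (fun x => u' x * v x) volume a b := by
    apply ContinuousOn.intervalIntegrable; rw [huIcc]; exact hu'.mul hv
  have i2 : IntervalIntegrable (fun x => u x * v' x) volume a b := by
    apply ContinuousOn.intervalIntegrable; rw [huIcc]; exact hu.mul hv'
  rw [integral_add i1 i2] at h
  linarith

/-- Basic facts about a `C²` function on `Icc a b`. -/
lemma deriv_facts {a b : ℝ} (hab : a < b) {f : ℝ → ℝ}
    (hf : ContDiffOn ℝ 2 f (Set.Icc a b)) :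
    ContinuousOn (derivWithin f (Set.Icc a b)) (Set.Icc a b) ∧
    ContinuousOn (derivWithin (derivWithin f (Set.Icc a b)) (Set.Icc a b)) (Set.Icc a b) ∧
    (∀ x ∈ Set.Ioo a b, HasDerivAt f (derivWithin f (Set.Icc a b) x) x) ∧
    (∀ x ∈ Set.Ioo a b, HasDerivAt (derivWithin f (Set.Icc a b))
      (derivWithin (derivWithin f (Set.Icc a b)) (Set.Icc a b) x) x) := by
  have hUD : UniqueDiffOn ℝ (Set.Icc a b) := uniqueDiffOn_Icc hab
  have hFc1 : ContDiffOn ℝ 1 (derivWithin f (Set.Icc a b)) (Set.Icc a b) :=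
    hf.derivWithin hUD (by norm_num)
  have hfd : DifferentiableOn ℝ f (Set.Icc a b) := hf.differentiableOn (by norm_num)
  have hFd : DifferentiableOn ℝ (derivWithin f (Set.Icc a b)) (Set.Icc a b) :=
    hFc1.differentiableOn (by norm_num)
  refine ⟨hFc1.continuousOn, hFc1.continuousOn_derivWithin hUD le_rfl, ?_, ?_⟩
  · intro x hx
    exact ((hfd x (Set.Ioo_subset_Icc_self hx)).hasDerivWithinAt).hasDerivAt
      (Icc_mem_nhds hx.1 hx.2)
  · intro x hx
    exact ((hFd x (Set.Ioo_subset_Icc_self hx)).hasDerivWithinAt).hasDerivAt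
      (Icc_mem_nhds hx.1 hx.2)

lemma ae_ne_point (b : ℝ) : ∀ᵐ x : ℝ ∂volume, x ≠ b := by
  simp only [ae_iff, not_not]
  rw [show {x : ℝ | x = b} = {b} from Set.setOf_eq_eq_singleton]
  exact Real.volume_singleton

lemma oneD_val {a b D lam : ℝ} (hab : a < b) {f g : ℝ → ℝ}
    (hf : ContDiffOn ℝ 2 f (Set.Icc a b)) (hg : ContDiffOn ℝ 2 g (Set.Icc a b))
    (hfa : derivWithin f (Set.Icc a b) a = 0) (hfb : derivWithin f (Set.Icc a b) b = 0) :
    ∫ x in a..b, (lam * f x - deriv (fun s => D * deriv f s) x) * g x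
    = lam * (∫ x in a..b, f x * g x)
      + D * ∫ x in a..b, derivWithin f (Set.Icc a b) x * derivWithin g (Set.Icc a b) x := by
  set F := derivWithin f (Set.Icc a b) with hF
  set F' := derivWithin F (Set.Icc a b) with hF'
  set G := derivWithin g (Set.Icc a b) with hG
  obtain ⟨hFcont, hF'cont, hfda, hFda⟩ := deriv_facts hab hf
  obtain ⟨hGcont, hG'cont, hgda, hGda⟩ := deriv_facts hab hg
  have huIcc : Set.uIcc a b = Set.Icc a b := Set.uIcc_of_le hab.le
  -- rewrite the second derivative on the interior
  have key : ∀ x ∈ Set.Ioo a b, deriv (fun s => D * deriv f s) x = D * F' x := by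
    intro x hx
    have h1 : (fun s => D * deriv f s) =ᶠ[nhds x] fun s => D * F s := by
      filter_upwards [Ioo_mem_nhds hx.1 hx.2] with s hs
      rw [hF, derivWithin_of_mem_nhds (Icc_mem_nhds hs.1 hs.2)]
    rw [h1.deriv_eq]
    exact ((hFda x hx).const_mul D).deriv
  have hcongr : (∫ x in a..b, (lam * f x - deriv (fun s => D * deriv f s) x) * g x)
      = ∫ x in a..b, (lam * f x * g x - D * F' x * g x) := by
    apply intervalIntegral.integral_congr_ae
    have hb := ae_ne_point b
    filter_upwards [hb] with x hxb hmem
    rw [Set.uIoc_of_le hab.le] at hmem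
    have hx : x ∈ Set.Ioo a b := ⟨hmem.1, lt_of_le_of_ne hmem.2 hxb⟩
    rw [key x hx]; ring
  rw [hcongr]
  have i1 : IntervalIntegrable (fun x => lam * f x * g x) volume a b := by
    apply ContinuousOn.intervalIntegrable; rw [huIcc]
    exact (continuousOn_const.mul hf.continuousOn).mul hg.continuousOn
  have i2 : IntervalIntegrable (fun x => D * F' x * g x) volume a b := by
    apply ContinuousOn.intervalIntegrable; rw [huIcc]
    exact (continuousOn_const.mul hF'cont).mul hg.continuousOn
  rw [integral_sub i1 i2]
  have hparts : ∫ x in a..b, F' x * g x = - ∫ x in a..b, F x * G x :=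
    parts_zero hab hFcont hg.continuousOn hFda hgda hF'cont hGcont hfa hfb
  have e1 : (∫ x in a..b, lam * f x * g x) = lam * ∫ x in a..b, f x * g x := by
    simp_rw [mul_assoc]; exact integral_const_mul _ _
  have e2 : (∫ x in a..b, D * F' x * g x) = D * ∫ x in a..b, F' x * g x := by
    simp_rw [mul_assoc]; exact integral_const_mul _ _
  rw [e1, e2, hparts]
  ring

lemma radial_val {R 𝒟 lam : ℝ} (hR : 0 < R) {f g : ℝ → ℝ}
    (hf : ContDiffOn ℝ 2 f (Set.Icc 0 R)) (hg : ContDiffOn ℝ 2 g (Set.Icc 0 R))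
    (hfR : derivWithin f (Set.Icc 0 R) R = 0) :
    ∫ r in (0:ℝ)..R, r ^ 2 * (lam * f r - (𝒟 / r ^ 2) * deriv (fun s => s ^ 2 * deriv f s) r) * g r
    = lam * (∫ r in (0:ℝ)..R, r ^ 2 * f r * g r)
      + 𝒟 * ∫ r in (0:ℝ)..R,
          r ^ 2 * derivWithin f (Set.Icc 0 R) r * derivWithin g (Set.Icc 0 R) r := by
  set F := derivWithin f (Set.Icc 0 R) with hF
  set F' := derivWithin F (Set.Icc 0 R) with hF'
  set G := derivWithin g (Set.Icc 0 R) with hG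
  obtain ⟨hFcont, hF'cont, hfda, hFda⟩ := deriv_facts hR hf
  obtain ⟨hGcont, hG'cont, hgda, hGda⟩ := deriv_facts hR hg
  have huIcc : Set.uIcc (0:ℝ) R = Set.Icc 0 R := Set.uIcc_of_le hR.le
  -- the weighted derivative u r = r² F r
  set u : ℝ → ℝ := fun s => s ^ 2 * F s with hu
  set u' : ℝ → ℝ := fun s => 2 * s * F s + s ^ 2 * F' s with hu'
  have huda : ∀ r ∈ Set.Ioo (0:ℝ) R, HasDerivAt u (u' r) r := by
    intro r hr
    have h := (hasDerivAt_pow 2 r).mul (hFda r hr)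
    have h2 := h.congr_deriv (show _ = 2 * r * F r + r ^ 2 * F' r by ring)
    exact h2
  have hucont : ContinuousOn u (Set.Icc 0 R) :=
    (continuousOn_pow 2).mul hFcont
  have hu'cont : ContinuousOn u' (Set.Icc 0 R) := by
    apply ContinuousOn.add
    · exact (continuousOn_const.mul continuousOn_id).mul hFcont
    · exact (continuousOn_pow 2).mul hF'cont
  -- rewrite the integrand on the interior
  have key : ∀ r ∈ Set.Ioo (0:ℝ) R,
      r ^ 2 * (lam * f r - (𝒟 / r ^ 2) * deriv (fun s => s ^ 2 * deriv f s) r) * g r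
      = lam * (r ^ 2 * f r * g r) - 𝒟 * (u' r * g r) := by
    intro r hr
    have hrne : r ≠ 0 := hr.1.ne'
    have h1 : (fun s => s ^ 2 * deriv f s) =ᶠ[nhds r] u := by
      filter_upwards [Ioo_mem_nhds hr.1 hr.2] with s hs
      show s ^ 2 * deriv f s = s ^ 2 * derivWithin f (Set.Icc 0 R) s
      rw [derivWithin_of_mem_nhds (Icc_mem_nhds hs.1 hs.2)]
    have h2 : deriv (fun s => s ^ 2 * deriv f s) r = u' r := by
      rw [h1.deriv_eq]; exact (huda r hr).deriv
    rw [h2]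
    field_simp
  have hcongr : (∫ r in (0:ℝ)..R,
        r ^ 2 * (lam * f r - (𝒟 / r ^ 2) * deriv (fun s => s ^ 2 * deriv f s) r) * g r)
      = ∫ r in (0:ℝ)..R, (lam * (r ^ 2 * f r * g r) - 𝒟 * (u' r * g r)) := by
    apply intervalIntegral.integral_congr_ae
    filter_upwards [ae_ne_point R] with r hrb hmem
    rw [Set.uIoc_of_le hR.le] at hmem
    exact key r ⟨hmem.1, lt_of_le_of_ne hmem.2 hrb⟩
  rw [hcongr]
  have i1 : IntervalIntegrable (fun r => lam * (r ^ 2 * f r * g r)) volume 0 R := by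
    apply ContinuousOn.intervalIntegrable; rw [huIcc]
    exact continuousOn_const.mul
      (((continuousOn_pow 2).mul hf.continuousOn).mul hg.continuousOn)
  have i2 : IntervalIntegrable (fun r => 𝒟 * (u' r * g r)) volume 0 R := by
    apply ContinuousOn.intervalIntegrable; rw [huIcc]
    exact continuousOn_const.mul (hu'cont.mul hg.continuousOn)
  rw [integral_sub i1 i2, intervalIntegral.integral_const_mul, intervalIntegral.integral_const_mul]
  have hparts : ∫ r in (0:ℝ)..R, u' r * g r = - ∫ r in (0:ℝ)..R, u r * G r :=
    parts_zero hR hucont hg.continuousOn huda hgda hu'cont hGcont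
      (by simp [hu]) (by simp [hu, hfR])
  rw [hparts]
  have : (∫ r in (0:ℝ)..R, u r * G r) = ∫ r in (0:ℝ)..R, r ^ 2 * F r * G r := by
    apply intervalIntegral.integral_congr
    intro r _; simp [hu, mul_assoc]
  rw [this]
  ring

lemma oneD_sym {a b D lam : ℝ} (hab : a < b) {f g : ℝ → ℝ}
    (hf : ContDiffOn ℝ 2 f (Set.Icc a b)) (hg : ContDiffOn ℝ 2 g (Set.Icc a b))
    (hfa : derivWithin f (Set.Icc a b) a = 0) (hfb : derivWithin f (Set.Icc a b) b = 0)
    (hga : derivWithin g (Set.Icc a b) a = 0) (hgb : derivWithin g (Set.Icc a b) b = 0) :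
    ∫ x in a..b, (lam * f x - deriv (fun s => D * deriv f s) x) * g x
    = ∫ x in a..b, (lam * g x - deriv (fun s => D * deriv g s) x) * f x := by
  rw [oneD_val hab hf hg hfa hfb, oneD_val hab hg hf hga hgb]
  congr 1
  · congr 1
    exact intervalIntegral.integral_congr fun x _ => mul_comm _ _
  · congr 1
    exact intervalIntegral.integral_congr fun x _ => by ring

lemma radial_sym {R 𝒟 lam : ℝ} (hR : 0 < R) {f g : ℝ → ℝ}
    (hf : ContDiffOn ℝ 2 f (Set.Icc 0 R)) (hg : ContDiffOn ℝ 2 g (Set.Icc 0 R))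
    (hfR : derivWithin f (Set.Icc 0 R) R = 0) (hgR : derivWithin g (Set.Icc 0 R) R = 0) :
    ∫ r in (0:ℝ)..R, r ^ 2 * (lam * f r - (𝒟 / r ^ 2) * deriv (fun s => s ^ 2 * deriv f s) r) * g r
    = ∫ r in (0:ℝ)..R,
        r ^ 2 * (lam * g r - (𝒟 / r ^ 2) * deriv (fun s => s ^ 2 * deriv g s) r) * f r := by
  rw [radial_val hR hf hg hfR, radial_val hR hg hf hgR]
  congr 1
  · congr 1
    exact intervalIntegral.integral_congr fun x _ => by ring
  · congr 1
    exact intervalIntegral.integral_congr fun x _ => by ring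

/-- symmetry of the battery operator `𝒜` on
`X = L²(0,L) ⊕ ⊕ₖ L²((L₁,L)×(0,R_k); r² dr dx)`, expressed for twice continuously
differentiable representatives with Neumann boundary conditions:
`⟨𝒜c, w⟩_X = ⟨c, 𝒜w⟩_X`. -/
theorem battery_operator_symmetric
    (L₁ L D 𝒟 lam : ℝ) (hL₁ : 0 < L₁) (hL : L₁ < L)
    (hD : 0 < D) (h𝒟 : 0 < 𝒟) (hlam : 0 < lam)
    (R : Fin 3 → ℝ) (hR : ∀ k, 0 < R k)
    (c₁ w₁ : ℝ → ℝ)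
    (hc₁ : ContDiffOn ℝ 2 c₁ (Set.Icc 0 L)) (hw₁ : ContDiffOn ℝ 2 w₁ (Set.Icc 0 L))
    (hc₁0 : derivWithin c₁ (Set.Icc 0 L) 0 = 0) (hc₁L : derivWithin c₁ (Set.Icc 0 L) L = 0)
    (hw₁0 : derivWithin w₁ (Set.Icc 0 L) 0 = 0) (hw₁L : derivWithin w₁ (Set.Icc 0 L) L = 0)
    (c w : Fin 3 → ℝ → ℝ → ℝ)
    (hc : ∀ k, ∀ x ∈ Set.Icc L₁ L, ContDiffOn ℝ 2 (c k x) (Set.Icc 0 (R k)))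
    (hw : ∀ k, ∀ x ∈ Set.Icc L₁ L, ContDiffOn ℝ 2 (w k x) (Set.Icc 0 (R k)))
    (hc0 : ∀ k, ∀ x ∈ Set.Icc L₁ L, derivWithin (c k x) (Set.Icc 0 (R k)) 0 = 0)
    (hcR : ∀ k, ∀ x ∈ Set.Icc L₁ L, derivWithin (c k x) (Set.Icc 0 (R k)) (R k) = 0)
    (hw0 : ∀ k, ∀ x ∈ Set.Icc L₁ L, derivWithin (w k x) (Set.Icc 0 (R k)) 0 = 0)
    (hwR : ∀ k, ∀ x ∈ Set.Icc L₁ L, derivWithin (w k x) (Set.Icc 0 (R k)) (R k) = 0) :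
    (∫ x in (0 : ℝ)..L, (lam * c₁ x - deriv (fun s => D * deriv c₁ s) x) * w₁ x)
      + ∑ k : Fin 3, ∫ x in L₁..L, ∫ r in (0 : ℝ)..(R k),
          r ^ 2 * (lam * c k x r - (𝒟 / r ^ 2) * deriv (fun s => s ^ 2 * deriv (c k x) s) r)
            * w k x r
    = (∫ x in (0 : ℝ)..L, (lam * w₁ x - deriv (fun s => D * deriv w₁ s) x) * c₁ x)
      + ∑ k : Fin 3, ∫ x in L₁..L, ∫ r in (0 : ℝ)..(R k),
          r ^ 2 * (lam * w k x r - (𝒟 / r ^ 2) * deriv (fun s => s ^ 2 * deriv (w k x) s) r)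
            * c k x r := by
  have h0L : (0:ℝ) < L := hL₁.trans hL
  congr 1
  · exact oneD_sym h0L hc₁ hw₁ hc₁0 hc₁L hw₁0 hw₁L
  · apply Finset.sum_congr rfl
    intro k _
    apply intervalIntegral.integral_congr
    intro x hx
    rw [Set.uIcc_of_le hL.le] at hx
    exact radial_sym (hR k) (hc k x hx) (hw k x hx) (hcR k x hx) (hwR k x hx)
end
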